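/- Define the recursions Π_k = Aᵀ (Π_{k+1} + N_k) A with Π_T = 0, and Υ_k = Aᵀ Υ_{k+1} A + Q_1 with Υ_T = Q_2, where N_k = L_kᵀ (R + Bᵀ P_{k+1} B) L_k and P_k satisfies the Riccati recursion P_k = Q_1 + Aᵀ P_{k+1} A − N_k with P_T = Q_2. Then for all k = 0, 1, …, T−1, Υ_k − P_k = Π_{k+1} + N_k. -/
import Mathlib


open Matrix

/-- Proposition 1: `Υ_k - P_k = Pi2_{k+1} + N_k` for all `k < T`. -/
theorem upsilon_sub_riccati_eq_pi_add_N
    {n m : ℕ} (T : ℕ)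
    (A : Matrix (Fin n) (Fin n) ℝ) (B : Matrix (Fin n) (Fin m) ℝ)
    (Q1 Q2 : Matrix (Fin n) (Fin n) ℝ) (R : Matrix (Fin m) (Fin m) ℝ)
    (hQ1 : Q1.PosSemidef) (hQ2 : Q2.PosSemidef) (hR : R.PosDef)
    (P Pi2 Υ : ℕ → Matrix (Fin n) (Fin n) ℝ)
    (L : ℕ → Matrix (Fin m) (Fin n) ℝ)
    (N : ℕ → Matrix (Fin n) (Fin n) ℝ)
    (hL : ∀ k < T, L k = (R + Bᵀ * P (k + 1) * B)⁻¹ * (Bᵀ * P (k + 1) * A))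
    (hN : ∀ k < T, N k = (L k)ᵀ * (R + Bᵀ * P (k + 1) * B) * L k)
    (hPT : P T = Q2)
    (hP : ∀ k < T, P k = Q1 + Aᵀ * P (k + 1) * A - N k)
    (hPi2T : Pi2 T = 0)
    (hPi2 : ∀ k < T, Pi2 k = Aᵀ * (Pi2 (k + 1) + N k) * A)
    (hΥT : Υ T = Q2)
    (hΥ : ∀ k < T, Υ k = Aᵀ * Υ (k + 1) * A + Q1) :
    ∀ k < T, Υ k - P k = Pi2 (k + 1) + N k := by
  have key : ∀ d j, j + d = T → Aᵀ * (Υ j - P j) * A = Pi2 j := by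
    intro d
    induction d with
    | zero =>
      intro j hj
      have : j = T := by omega
      subst this
      simp [hPT, hΥT, hPi2T]
    | succ d ih =>
      intro j hj
      have hjT : j < T := by omega
      have h1 : Aᵀ * (Υ (j + 1) - P (j + 1)) * A = Pi2 (j + 1) := ih (j + 1) (by omega)
      rw [hΥ j hjT, hP j hjT, hPi2 j hjT]
      have h2 : Aᵀ * Υ (j + 1) * A + Q1 - (Q1 + Aᵀ * P (j + 1) * A - N j)
          = Aᵀ * (Υ (j + 1) - P (j + 1)) * A + N j := by noncomm_ring
      rw [h2, h1]
  intro k hk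
  have h1 : Aᵀ * (Υ (k + 1) - P (k + 1)) * A = Pi2 (k + 1) :=
    key (T - (k + 1)) (k + 1) (by omega)
  rw [hΥ k hk, hP k hk, ← h1]
  noncomm_ring
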